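/- Let V : ℤ → ℤ[T,T⁻¹] satisfy the Jones recurrence V(e+2) = (T³ − T)·V(e+1) + T⁴·V(e) for all e : ℤ. Then: (a) for every e, deg V(e−2) ≤ max(deg V(e−1), deg V(e)) − 1 in WithBot ℤ; (b) for every e and every m ≥ 2, deg V(e−m) ≤ max(deg V(e−1), deg V(e)) − (m − 1); in particular, there exists e₀ such that for every e ≤ e₀ the support of V(e) is contained in the nonpositive integers (V(e) is a polynomial in T⁻¹), and for every N : ℤ there exists e₁ such that deg V(e) ≤ N for all e ≤ e₁. -/

import Mathlib

/-- The degree of a Laurent polynomial `f`, viewed as a finitely supported function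
`ℤ → ℤ`: the maximum of its support in `WithBot ℤ` (so `jdeg 0 = ⊥`). -/
noncomputable def jdeg (f : LaurentPolynomial ℤ) : WithBot ℤ :=
  (f.coeff : ℤ →₀ ℤ).support.max

/-!
Inverting the recurrence (possible because `T⁴` is a unit) gives
`V(e-2) = T⁻⁴ V(e) - (T⁻¹ - T⁻³) V(e-1)`, so each step to the left lowers the degree bound:
`deg V(e-2) ≤ max (deg V(e-1) - 1) (deg V(e) - 4)`. Even with `- 2` in place of `- 4`, this
bound propagates by a two-step induction to a decay of the degree by at least one per step,
which forces the degrees to `-∞` as `e → -∞`.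
-/

open LaurentPolynomial

lemma jdeg_sub_le (f g : LaurentPolynomial ℤ) : jdeg (f - g) ≤ max (jdeg f) (jdeg g) :=
  AddMonoidAlgebra.supDegree_sub_le

lemma jdeg_mul_le (f g : LaurentPolynomial ℤ) : jdeg (f * g) ≤ jdeg f + jdeg g :=
  AddMonoidAlgebra.supDegree_mul_le WithBot.coe_add

lemma jdeg_T_le (n : ℤ) : jdeg (T n : LaurentPolynomial ℤ) ≤ n := degree_T_le n

lemma jdeg_T_mul_le (n : ℤ) (f : LaurentPolynomial ℤ) : jdeg (T n * f) ≤ jdeg f + n := by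
  grw [jdeg_mul_le, jdeg_T_le, add_comm]

lemma jdeg_le_of_mem_support {f : LaurentPolynomial ℤ} {n : ℤ}
    (hn : n ∈ (f.coeff : ℤ →₀ ℤ).support) : (n : WithBot ℤ) ≤ jdeg f :=
  Finset.le_max hn

lemma WithBot.exists_add_coe_le (M : WithBot ℤ) (N : ℤ) :
    ∃ k : ℤ, ∀ j ≤ k, M + j ≤ N := by
  induction M with
  | bot => exact ⟨0, fun j _ => by simp⟩
  | coe d => exact ⟨N - d, fun j hj => by rw [← WithBot.coe_add]; exact_mod_cast (by omega)⟩

lemma WithBot.le_max_add_of_two_step {a : ℕ → WithBot ℤ}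
    (h : ∀ n, a (n + 2) ≤ max (a (n + 1) + (-1 : ℤ)) (a n + (-2 : ℤ))) (n : ℕ) :
    a n ≤ max (a 0) (a 1) + ((1 - n : ℤ) : WithBot ℤ) := by
  set M := max (a 0) (a 1)
  have shift {x y z : ℤ} (hz : x + y ≤ z) : M + (x : WithBot ℤ) + y ≤ M + z := by
    rw [add_assoc, ← WithBot.coe_add]
    gcongr
    exact_mod_cast hz
  induction n using Nat.twoStepInduction with
  | zero => exact (le_max_left _ _).trans (le_add_of_nonneg_right (by norm_num))
  | one => rw [Nat.cast_one, sub_self, WithBot.coe_zero, add_zero]; exact le_max_right _ _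
  | more n ih₀ ih₁ =>
    refine (h n).trans (max_le ?_ ?_)
    · grw [ih₁]; exact shift (by push_cast; omega)
    · grw [ih₀]; exact shift (by push_cast; omega)

lemma jones_recurrence_backward {R : Type*} [CommRing R] {V : ℤ → R[T;T⁻¹]}
    (hV : ∀ e : ℤ, V (e + 2) = (T 3 - T 1) * V (e + 1) + T 4 * V e) (e : ℤ) :
    V (e - 2) = T (-4) * V e - (T (-1) - T (-3)) * V (e - 1) := by
  have h := hV (e - 2)
  rw [sub_add_cancel, show e - 2 + 1 = e - 1 by ring] at h
  calc V (e - 2) = T (-4) * (T 4 * V (e - 2)) := by rw [← mul_assoc, ← T_add]; simp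
    _ = T (-4) * V e - (T (-4) * T 3 - T (-4) * T 1) * V (e - 1) := by rw [h]; ring
    _ = T (-4) * V e - (T (-1) - T (-3)) * V (e - 1) := by simp only [← T_add]; norm_num

section JonesDegree

variable {V : ℤ → LaurentPolynomial ℤ}

lemma jdeg_jones_sub_two_le
    (hV : ∀ e : ℤ, V (e + 2) = (T 3 - T 1) * V (e + 1) + T 4 * V e) (e : ℤ) :
    jdeg (V (e - 2)) ≤ max (jdeg (V (e - 1)) + (-1 : ℤ)) (jdeg (V e) + (-2 : ℤ)) := by
  have hT : jdeg (T (-1) - T (-3) : LaurentPolynomial ℤ) ≤ (-1 : ℤ) :=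
    (jdeg_sub_le _ _).trans <| max_le (jdeg_T_le _) <| (jdeg_T_le _).trans (by norm_num)
  rw [jones_recurrence_backward hV, max_comm]
  refine (jdeg_sub_le _ _).trans (max_le_max ?_ ?_)
  · grw [jdeg_T_mul_le]; gcongr; norm_num
  · grw [jdeg_mul_le, hT, add_comm]

lemma jdeg_jones_sub_le
    (hV : ∀ e : ℤ, V (e + 2) = (T 3 - T 1) * V (e + 1) + T 4 * V e) (e : ℤ) (m : ℕ) :
    jdeg (V (e - m)) ≤ max (jdeg (V (e - 1))) (jdeg (V e)) + ((1 - m : ℤ) : WithBot ℤ) := by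
  have h := WithBot.le_max_add_of_two_step (a := fun k : ℕ => jdeg (V (e - k))) (fun n => by
    simpa [sub_sub, add_comm] using jdeg_jones_sub_two_le hV (e - n)) m
  simpa [max_comm] using h

end JonesDegree

/-- **Proposition 3.6**. If `V : ℤ → ℤ[T,T⁻¹]` satisfies the Jones recurrence, then
(a) `deg V(e−2) ≤ max(deg V(e−1), deg V(e)) − 1` for every `e`;
(b) `deg V(e−m) ≤ max(deg V(e−1), deg V(e)) − (m−1)` for every `e` and `m ≥ 2`;
in particular, for `e ≪ 0`, `V e` is a polynomial in `T⁻¹` (its support consists of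
nonpositive integers) and `deg V(e) → −∞` as `e → −∞`. -/
theorem jones_degree_negative_side (V : ℤ → LaurentPolynomial ℤ)
    (hV : ∀ e : ℤ, V (e + 2) = (T 3 - T 1) * V (e + 1) + T 4 * V e) :
    (∀ e : ℤ, jdeg (V (e - 2)) ≤ max (jdeg (V (e - 1))) (jdeg (V e)) + ((-1 : ℤ) : WithBot ℤ)) ∧
    (∀ (e : ℤ) (m : ℕ), 2 ≤ m →
      jdeg (V (e - m)) ≤
        max (jdeg (V (e - 1))) (jdeg (V e)) + ((1 - (m : ℤ) : ℤ) : WithBot ℤ)) ∧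
    (∃ e₀ : ℤ, ∀ e : ℤ, e ≤ e₀ → ∀ n ∈ ((V e).coeff : ℤ →₀ ℤ).support, n ≤ 0) ∧
    (∀ N : ℤ, ∃ e₁ : ℤ, ∀ e : ℤ, e ≤ e₁ → jdeg (V e) ≤ (N : WithBot ℤ)) := by
  have jdeg_eventually_le (N : ℤ) : ∃ e₁ : ℤ, ∀ e : ℤ, e ≤ e₁ → jdeg (V e) ≤ (N : WithBot ℤ) := by
    obtain ⟨k, hk⟩ := WithBot.exists_add_coe_le (max (jdeg (V (0 - 1))) (jdeg (V 0))) N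
    refine ⟨min 0 (k - 1), fun e he => ?_⟩
    obtain ⟨m, rfl⟩ : ∃ m : ℕ, e = 0 - m := ⟨(-e).toNat, by omega⟩
    exact (jdeg_jones_sub_le hV 0 m).trans (hk _ (by omega))
  refine ⟨fun e => by simpa using jdeg_jones_sub_le hV e 2,
    fun e m _ => jdeg_jones_sub_le hV e m, ?_, jdeg_eventually_le⟩
  obtain ⟨e₀, he₀⟩ := jdeg_eventually_le 0
  exact ⟨e₀, fun e he n hn => by exact_mod_cast (jdeg_le_of_mem_support hn).trans (he₀ e he)⟩
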